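/- arXiv:2501.18475 — 2 statements merged into one kernel-verified Lean document; each statement's English description precedes it below -/
import Mathlib

section
/- Let X ∈ ℝ^{p×m} have full column rank with H = XᵀX = RᵀR for invertible R, and let ΔW ∈ ℝ^{m×n}. If Z* is a best rank-r approximation of R ΔW in Frobenius norm, then any pair (A, B) with A Bᵀ = R⁻¹ Z* minimizes ‖X(A Bᵀ − ΔW)‖²_F over all A ∈ ℝ^{m×r}, B ∈ ℝ^{n×r}. -/
open Matrix

/-- Frobenius norm squared: `‖A‖²_F = Tr(Aᵀ A)`. -/
noncomputable def frobSq {m n : ℕ} (A : Matrix (Fin m) (Fin n) ℝ) : ℝ :=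
  Matrix.trace (Aᵀ * A)

lemma frobSq_X_eq_R {p m n : ℕ} (X : Matrix (Fin p) (Fin m) ℝ)
    (R : Matrix (Fin m) (Fin m) ℝ) (hH : Rᵀ * R = Xᵀ * X)
    (M : Matrix (Fin m) (Fin n) ℝ) : frobSq (X * M) = frobSq (R * M) := by
  unfold frobSq
  rw [transpose_mul, transpose_mul]
  rw [show Mᵀ * Xᵀ * (X * M) = Mᵀ * (Xᵀ * X) * M by
        rw [Matrix.mul_assoc, Matrix.mul_assoc, Matrix.mul_assoc],
      show Mᵀ * Rᵀ * (R * M) = Mᵀ * (Rᵀ * R) * M by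
        rw [Matrix.mul_assoc, Matrix.mul_assoc, Matrix.mul_assoc], hH]

/-- CLoQ Theorem 3.1: if `Z*` is a best rank-`r` approximation of `R ΔW` and
`A Bᵀ = R⁻¹ Z*`, then `(A, B)` minimizes `‖X (A Bᵀ − ΔW)‖²_F`. -/
theorem stmt7 {p m n r : ℕ} (X : Matrix (Fin p) (Fin m) ℝ) (hX : X.rank = m)
    (R : Matrix (Fin m) (Fin m) ℝ) (hR : IsUnit R) (hH : Rᵀ * R = Xᵀ * X)
    (ΔW Zstar : Matrix (Fin m) (Fin n) ℝ)
    (hZrank : Zstar.rank ≤ r)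
    (hZbest : ∀ Z : Matrix (Fin m) (Fin n) ℝ, Z.rank ≤ r →
        frobSq (Zstar - R * ΔW) ≤ frobSq (Z - R * ΔW))
    (A : Matrix (Fin m) (Fin r) ℝ) (B : Matrix (Fin n) (Fin r) ℝ)
    (hAB : A * Bᵀ = R⁻¹ * Zstar) :
    ∀ (A' : Matrix (Fin m) (Fin r) ℝ) (B' : Matrix (Fin n) (Fin r) ℝ),
      frobSq (X * (A * Bᵀ - ΔW)) ≤ frobSq (X * (A' * B'ᵀ - ΔW)) := by
  intro A' B'
  rw [frobSq_X_eq_R X R hH, frobSq_X_eq_R X R hH]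
  have hRAB : R * (A * Bᵀ) = Zstar := by
    rw [hAB, Matrix.mul_nonsing_inv_cancel_left _ _ ((Matrix.isUnit_iff_isUnit_det R).mp hR)]
  rw [Matrix.mul_sub, Matrix.mul_sub, hRAB]
  refine hZbest _ ?_
  calc (R * (A' * B'ᵀ)).rank ≤ (A' * B'ᵀ).rank := Matrix.rank_mul_le_right _ _
    _ ≤ A'.rank := Matrix.rank_mul_le_left _ _
    _ ≤ r := Matrix.rank_le_width _
end

section
/- Let R be invertible with RᵀR = H = XᵀX for full-column-rank X, and ΔW ∈ ℝ^{m×n} with SVD of R ΔW given by U Σ Vᵀ. Setting A = R⁻¹ U_{:r} Σ_{:r} and B = V_{:r} yields A Bᵀ = R⁻¹ LR_r(R ΔW), so (A, B) is an optimal solution of min ‖X(A Bᵀ − ΔW)‖²_F. -/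
open Matrix

/-!
Since `RᵀR = XᵀX`, we have `‖X M‖_F = ‖R M‖_F` for every `M`, and the orthogonal factors of the
SVD turn `‖X (A' B'ᵀ - ΔW)‖²_F` into `‖C Dᵀ - Σ‖²_F` with `C = Uᵀ R A'` and `D = Vᵀ B'`, while
`(A, B)` gives `‖Σ_r - Σ‖²_F`. So it is Eckart–Young for the diagonal `Σ`: if `P` is the
orthogonal projection onto the column space of `C`, then
`‖C Dᵀ - Σ‖²_F ≥ ‖(1 - P) Σ‖²_F = ∑ᵢ (1 - Pᵢᵢ) σᵢ²`, and the weights `Pᵢᵢ ∈ [0, 1]` add up to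
`rank C ≤ r`, so this is at least the sum of all but the `r` largest `σᵢ²`.
-/

section Frobenius

variable {m n p q : ℕ}

lemma frobSq_eq_trace_mul_transpose (A : Matrix (Fin m) (Fin n) ℝ) :
    frobSq A = trace (A * Aᵀ) :=
  trace_mul_comm _ _

lemma frobSq_nonneg (A : Matrix (Fin m) (Fin n) ℝ) : 0 ≤ frobSq A := by
  show 0 ≤ ∑ j, ∑ i, A i j * A i j
  exact Finset.sum_nonneg fun j _ => Finset.sum_nonneg fun i _ => mul_self_nonneg (A i j)

lemma frobSq_neg (A : Matrix (Fin m) (Fin n) ℝ) : frobSq (-A) = frobSq A := by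
  simp [frobSq]

lemma frobSq_transpose (A : Matrix (Fin m) (Fin n) ℝ) : frobSq Aᵀ = frobSq A := by
  rw [frobSq, transpose_transpose, ← frobSq_eq_trace_mul_transpose]

lemma frobSq_mul_eq_of_gram_eq {X : Matrix (Fin p) (Fin m) ℝ} {Y : Matrix (Fin q) (Fin m) ℝ}
    (h : Xᵀ * X = Yᵀ * Y) (M : Matrix (Fin m) (Fin n) ℝ) :
    frobSq (X * M) = frobSq (Y * M) := by
  rw [frobSq, frobSq, transpose_mul, transpose_mul, Matrix.mul_assoc, ← Matrix.mul_assoc Xᵀ, h,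
    Matrix.mul_assoc, Matrix.mul_assoc]

lemma frobSq_mul_of_transpose_mul_self {U : Matrix (Fin p) (Fin m) ℝ} (hU : Uᵀ * U = 1)
    (M : Matrix (Fin m) (Fin n) ℝ) : frobSq (U * M) = frobSq M := by
  rw [frobSq_mul_eq_of_gram_eq (Y := (1 : Matrix (Fin m) (Fin m) ℝ))
    (by rw [hU, transpose_one, Matrix.mul_one]), Matrix.one_mul]

lemma frobSq_mul_transpose_of_transpose_mul_self {V : Matrix (Fin p) (Fin n) ℝ}
    (hV : Vᵀ * V = 1) (M : Matrix (Fin m) (Fin n) ℝ) : frobSq (M * Vᵀ) = frobSq M := by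
  rw [← frobSq_transpose, transpose_mul, transpose_transpose,
    frobSq_mul_of_transpose_mul_self hV, frobSq_transpose]

end Frobenius

section Projection

variable {m n : ℕ} {P : Matrix (Fin m) (Fin m) ℝ}

lemma frobSq_mul_of_isSymm_of_isIdempotentElem (hP : P.IsSymm) (hP' : IsIdempotentElem P)
    (M : Matrix (Fin m) (Fin n) ℝ) : frobSq (P * M) = trace (Mᵀ * P * M) := by
  rw [frobSq, transpose_mul, hP.eq, Matrix.mul_assoc, ← Matrix.mul_assoc P, hP'.eq,
    Matrix.mul_assoc]

lemma frobSq_mul_le_of_isSymm_of_isIdempotentElem (hP : P.IsSymm) (hP' : IsIdempotentElem P)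
    (M : Matrix (Fin m) (Fin n) ℝ) : frobSq (P * M) ≤ frobSq M := by
  have hsplit : frobSq M = frobSq (P * M) + frobSq ((1 - P) * M) := by
    rw [frobSq_mul_of_isSymm_of_isIdempotentElem hP hP',
      frobSq_mul_of_isSymm_of_isIdempotentElem (isSymm_one.sub hP) hP'.one_sub,
      ← trace_add, ← Matrix.add_mul, ← Matrix.mul_add, add_sub_cancel, Matrix.mul_one, frobSq]
  linarith [frobSq_nonneg ((1 - P) * M)]

lemma diag_eq_sum_sq_of_isSymm_of_isIdempotentElem (hP : P.IsSymm) (hP' : IsIdempotentElem P)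
    (i : Fin m) : P i i = ∑ j, P i j ^ 2 := by
  conv_lhs => rw [← hP'.eq, mul_apply]
  exact Finset.sum_congr rfl fun j _ => by rw [hP.apply i j, sq]

lemma diag_nonneg_of_isSymm_of_isIdempotentElem (hP : P.IsSymm) (hP' : IsIdempotentElem P)
    (i : Fin m) : 0 ≤ P i i := by
  rw [diag_eq_sum_sq_of_isSymm_of_isIdempotentElem hP hP']
  exact Finset.sum_nonneg fun j _ => sq_nonneg (P i j)

lemma diag_le_one_of_isSymm_of_isIdempotentElem (hP : P.IsSymm) (hP' : IsIdempotentElem P)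
    (i : Fin m) : P i i ≤ 1 := by
  have hsq : P i i ^ 2 ≤ P i i := by
    conv_rhs => rw [diag_eq_sum_sq_of_isSymm_of_isIdempotentElem hP hP']
    exact Finset.single_le_sum (f := fun j => P i j ^ 2) (fun j _ => sq_nonneg _)
      (Finset.mem_univ i)
  nlinarith [diag_nonneg_of_isSymm_of_isIdempotentElem hP hP' i]

lemma frobSq_mul_eq_sum_diag_mul {S : Matrix (Fin m) (Fin n) ℝ} {d : Fin m → ℝ}
    (hS : S * Sᵀ = diagonal d) (hP : P.IsSymm) (hP' : IsIdempotentElem P) :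
    frobSq (P * S) = ∑ i, P i i * d i := by
  rw [frobSq_eq_trace_mul_transpose, transpose_mul, hP.eq, Matrix.mul_assoc, ← Matrix.mul_assoc S,
    hS, trace_mul_comm, Matrix.mul_assoc, hP'.eq]
  simp [trace, diagonal_mul, mul_comm]

end Projection

lemma sum_tail_le_sum_one_sub_mul {m r : ℕ} {t : ℕ → ℝ} (ht : Antitone t) (ht0 : ∀ i, 0 ≤ t i)
    {w : Fin m → ℝ} (hw0 : ∀ i, 0 ≤ w i) (hw1 : ∀ i, w i ≤ 1) (hw : ∑ i, w i ≤ r) :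
    ∑ i : Fin m, (if r ≤ (i : ℕ) then t i else 0) ≤ ∑ i, (1 - w i) * t i := by
  -- `t r` separates the `r` largest values of `t` from the others
  have hterm : ∀ i : Fin m, (if r ≤ (i : ℕ) then t i else 0) ≤
      (1 - w i) * t i + (w i - if (i : ℕ) < r then 1 else 0) * t r := by
    intro i
    by_cases hir : r ≤ (i : ℕ)
    · have := ht hir
      rw [if_pos hir, if_neg hir.not_gt]
      nlinarith [hw0 i]
    · have := ht (le_of_not_ge hir)
      rw [if_neg hir, if_pos (lt_of_not_ge hir)]
      nlinarith [hw1 i]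
  have hcard : ∑ i : Fin m, (if (i : ℕ) < r then (1 : ℝ) else 0) = min (m : ℝ) r := by
    rw [Finset.sum_boole, Fin.card_filter_val_lt, Nat.cast_min]
  have hwm : ∑ i, w i ≤ m := by
    simpa using Finset.sum_le_sum fun i (_ : i ∈ Finset.univ) => hw1 i
  have htail : ∑ i : Fin m, (w i - if (i : ℕ) < r then 1 else 0) * t r ≤ 0 := by
    rw [← Finset.sum_mul, Finset.sum_sub_distrib, hcard]
    exact mul_nonpos_of_nonpos_of_nonneg (sub_nonpos.mpr (le_min hwm hw)) (ht0 r)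
  calc ∑ i : Fin m, (if r ≤ (i : ℕ) then t i else 0)
      ≤ ∑ i, ((1 - w i) * t i + (w i - if (i : ℕ) < r then 1 else 0) * t r) :=
        Finset.sum_le_sum fun i _ => hterm i
    _ ≤ ∑ i, (1 - w i) * t i := by rw [Finset.sum_add_distrib]; linarith

lemma exists_isSymm_isIdempotentElem_mul_eq_self {m r : ℕ} (C : Matrix (Fin m) (Fin r) ℝ) :
    ∃ P : Matrix (Fin m) (Fin m) ℝ, P.IsSymm ∧ IsIdempotentElem P ∧ P * C = C ∧ trace P ≤ r := by
  let col : Fin r → EuclideanSpace ℝ (Fin m) := fun a => WithLp.toLp 2 fun i => C i a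
  let W := Submodule.span ℝ (Set.range col)
  let b := stdOrthonormalBasis ℝ W
  let Q : Matrix (Fin m) (Fin (Module.finrank ℝ W)) ℝ :=
    of fun i c => (b c : EuclideanSpace ℝ (Fin m)) i
  have hinner : ∀ x y : W,
      inner ℝ x y = ∑ i, (x : EuclideanSpace ℝ (Fin m)) i * (y : EuclideanSpace ℝ (Fin m)) i := by
    intro x y
    simp [Submodule.coe_inner, PiLp.inner_apply, mul_comm]
  have hQQ : Qᵀ * Q = 1 := by
    ext c d
    rw [mul_apply, one_apply, ← orthonormal_iff_ite.mp b.orthonormal c d, hinner]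
    rfl
  have hQC : Q * (Qᵀ * C) = C := by
    ext i a
    have hexp := congrArg (fun x : W => (x : EuclideanSpace ℝ (Fin m)) i)
      (b.sum_repr' ⟨col a, Submodule.subset_span (Set.mem_range_self a)⟩)
    simp only [Submodule.coe_sum, Submodule.coe_smul, WithLp.ofLp_sum, WithLp.ofLp_smul,
      Finset.sum_apply, Pi.smul_apply, smul_eq_mul, hinner] at hexp
    exact (Finset.sum_congr rfl fun c _ => mul_comm _ _).trans hexp
  refine ⟨Q * Qᵀ, ?_, ?_, ?_, ?_⟩
  · simp [IsSymm, transpose_mul]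
  · rw [IsIdempotentElem, Matrix.mul_assoc, ← Matrix.mul_assoc Qᵀ, hQQ, Matrix.one_mul]
  · rw [Matrix.mul_assoc, hQC]
  · rw [trace_mul_comm, hQQ, trace_one, Fintype.card_fin]
    exact_mod_cast (finrank_range_le_card (R := ℝ) col).trans_eq (Fintype.card_fin r)

def rectDiag (m n : ℕ) (f : ℕ → ℝ) : Matrix (Fin m) (Fin n) ℝ :=
  of fun i j => if (i : ℕ) = j then f i else 0

section RectDiag

variable {m n : ℕ}

lemma rectDiag_sub (f g : ℕ → ℝ) : rectDiag m n f - rectDiag m n g = rectDiag m n (f - g) := by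
  ext i j
  by_cases h : (i : ℕ) = j <;> simp [rectDiag, h]

lemma rectDiag_mul_transpose (f : ℕ → ℝ) :
    rectDiag m n f * (rectDiag m n f)ᵀ =
      diagonal fun i : Fin m => if (i : ℕ) < n then f i ^ 2 else 0 := by
  ext i i'
  simp only [mul_apply, diagonal_apply, rectDiag, transpose_apply, of_apply]
  rw [Fin.sum_univ_eq_sum_range
    (fun k => (if (i : ℕ) = k then f i else 0) * (if (i' : ℕ) = k then f i' else 0)) n]
  simp only [ite_mul, zero_mul, Finset.sum_ite_eq, Finset.mem_range]
  by_cases hii : i = i'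
  · subst hii; simp [sq]
  · simp [hii, Fin.val_ne_of_ne (Ne.symm hii)]

lemma frobSq_rectDiag (f : ℕ → ℝ) :
    frobSq (rectDiag m n f) = ∑ i : Fin m, if (i : ℕ) < n then f i ^ 2 else 0 := by
  rw [frobSq_eq_trace_mul_transpose, rectDiag_mul_transpose, trace_diagonal]

lemma castLE_mul_diagonal_mul_transpose_castLE {r : ℕ} (hrm : r ≤ m) (hrn : r ≤ n) (f : ℕ → ℝ) :
    (1 : Matrix (Fin m) (Fin m) ℝ).submatrix id (Fin.castLE hrm) *
        diagonal (fun a : Fin r => f a) *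
          ((1 : Matrix (Fin n) (Fin n) ℝ).submatrix id (Fin.castLE hrn))ᵀ =
      rectDiag m n (fun i => if i < r then f i else 0) := by
  ext k l
  simp only [mul_apply (M := _ * diagonal _), mul_diagonal, submatrix_apply, id, transpose_apply,
    one_apply, Fin.ext_iff, Fin.val_castLE, rectDiag, of_apply]
  rw [Fin.sum_univ_eq_sum_range
    (fun a => (if (k : ℕ) = a then (1 : ℝ) else 0) * f a * (if (l : ℕ) = a then 1 else 0)) r]
  simp only [ite_mul, one_mul, zero_mul, Finset.sum_ite_eq, Finset.mem_range]
  by_cases hkl : (k : ℕ) = l <;> simp [hkl, eq_comm]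

lemma submatrix_castLE_mul_diagonal_mul_transpose {p q r : ℕ} (hrm : r ≤ m) (hrn : r ≤ n)
    (U : Matrix (Fin p) (Fin m) ℝ) (V : Matrix (Fin q) (Fin n) ℝ) (f : ℕ → ℝ) :
    U.submatrix id (Fin.castLE hrm) * diagonal (fun a : Fin r => f a) *
        (V.submatrix id (Fin.castLE hrn))ᵀ =
      U * rectDiag m n (fun i => if i < r then f i else 0) * Vᵀ := by
  have hcols : ∀ {k l : ℕ} (h : r ≤ k) (M : Matrix (Fin l) (Fin k) ℝ),
      M.submatrix id (Fin.castLE h) =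
        M * (1 : Matrix (Fin k) (Fin k) ℝ).submatrix id (Fin.castLE h) :=
    fun h M => (mul_submatrix_one (Equiv.refl _) _ M).symm
  rw [hcols hrm U, hcols hrn V, ← castLE_mul_diagonal_mul_transpose_castLE hrm hrn, transpose_mul]
  simp only [Matrix.mul_assoc]

end RectDiag

theorem frobSq_truncate_sub_rectDiag_le {m n r : ℕ} {σ : ℕ → ℝ} (hσ0 : ∀ i, 0 ≤ σ i)
    (hσ : Antitone σ) (C : Matrix (Fin m) (Fin r) ℝ) (D : Matrix (Fin n) (Fin r) ℝ) :
    frobSq (rectDiag m n (fun i => if i < r then σ i else 0) - rectDiag m n σ) ≤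
      frobSq (C * Dᵀ - rectDiag m n σ) := by
  obtain ⟨P, hP, hP', hPC, htrP⟩ := exists_isSymm_isIdempotentElem_mul_eq_self C
  have hcompl : (1 - P).IsSymm := isSymm_one.sub hP
  let t : ℕ → ℝ := fun i => if i < n then σ i ^ 2 else 0
  have ht0 : ∀ i, 0 ≤ t i := fun i => by
    simp only [t]
    split_ifs <;> positivity
  have ht : Antitone t := fun i j hij => by
    simp only [t]
    split_ifs with hj hi hi
    · exact pow_le_pow_left₀ (hσ0 j) (hσ hij) 2
    · omega
    · positivity
    · exact le_rfl
  calc frobSq (rectDiag m n (fun i => if i < r then σ i else 0) - rectDiag m n σ)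
      = ∑ i : Fin m, if r ≤ (i : ℕ) then t i else 0 := by
        rw [rectDiag_sub, frobSq_rectDiag]
        refine Finset.sum_congr rfl fun i _ => ?_
        simp only [t, Pi.sub_apply]
        split_ifs <;> first | (exfalso; omega) | ring
    _ ≤ ∑ i, (1 - P i i) * t i :=
        sum_tail_le_sum_one_sub_mul ht ht0 (diag_nonneg_of_isSymm_of_isIdempotentElem hP hP')
          (diag_le_one_of_isSymm_of_isIdempotentElem hP hP') htrP
    _ = frobSq ((1 - P) * rectDiag m n σ) := by
        rw [frobSq_mul_eq_sum_diag_mul (rectDiag_mul_transpose σ) hcompl hP'.one_sub]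
        simp only [Matrix.sub_apply, one_apply_eq, t]
    _ = frobSq ((1 - P) * (C * Dᵀ - rectDiag m n σ)) := by
        have hkill : (1 - P) * (C * Dᵀ) = 0 := by
          rw [← Matrix.mul_assoc, Matrix.sub_mul, Matrix.one_mul, hPC, sub_self, Matrix.zero_mul]
        rw [Matrix.mul_sub, hkill, zero_sub, frobSq_neg]
    _ ≤ frobSq (C * Dᵀ - rectDiag m n σ) :=
        frobSq_mul_le_of_isSymm_of_isIdempotentElem hcompl hP'.one_sub _

lemma frobSq_mul_sub_eq_of_svd {p k m n : ℕ} {X : Matrix (Fin p) (Fin m) ℝ}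
    {R : Matrix (Fin k) (Fin m) ℝ} {U : Matrix (Fin k) (Fin k) ℝ} {V : Matrix (Fin n) (Fin n) ℝ}
    {S : Matrix (Fin k) (Fin n) ℝ} {ΔW : Matrix (Fin m) (Fin n) ℝ} (hH : Rᵀ * R = Xᵀ * X)
    (hU : Uᵀ * U = 1) (hV : Vᵀ * V = 1) (hSVD : R * ΔW = U * S * Vᵀ)
    (M : Matrix (Fin m) (Fin n) ℝ) :
    frobSq (X * (M - ΔW)) = frobSq (Uᵀ * (R * M) * V - S) := by
  have hM : R * M - U * S * Vᵀ = U * (Uᵀ * (R * M) * V - S) * Vᵀ := by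
    rw [Matrix.mul_sub, Matrix.sub_mul]
    simp only [← Matrix.mul_assoc, mul_eq_one_comm.mp hU, Matrix.one_mul]
    simp only [Matrix.mul_assoc, mul_eq_one_comm.mp hV, Matrix.mul_one]
  rw [← frobSq_mul_eq_of_gram_eq hH, Matrix.mul_sub, hSVD, hM,
    frobSq_mul_transpose_of_transpose_mul_self hV, frobSq_mul_of_transpose_mul_self hU]

theorem stmt14_general {p m n r : ℕ} (hrm : r ≤ m) (hrn : r ≤ n)
    (X : Matrix (Fin p) (Fin m) ℝ)
    (R : Matrix (Fin m) (Fin m) ℝ) (hR : IsUnit R) (hH : Rᵀ * R = Xᵀ * X)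
    (ΔW : Matrix (Fin m) (Fin n) ℝ)
    (U : Matrix (Fin m) (Fin m) ℝ) (V : Matrix (Fin n) (Fin n) ℝ)
    (σ : ℕ → ℝ)
    (hU₁ : Uᵀ * U = 1)
    (hV₁ : Vᵀ * V = 1)
    (hσnn : ∀ i, 0 ≤ σ i) (hσmono : ∀ i j, i ≤ j → σ j ≤ σ i)
    (S : Matrix (Fin m) (Fin n) ℝ)
    (hS : ∀ i j, S i j = if (i : ℕ) = (j : ℕ) then σ (i : ℕ) else 0)
    (hSVD : R * ΔW = U * S * Vᵀ)
    (Sr : Matrix (Fin m) (Fin n) ℝ)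
    (hSr : ∀ i j, Sr i j =
      if (i : ℕ) = (j : ℕ) ∧ (i : ℕ) < r then σ (i : ℕ) else 0)
    (A : Matrix (Fin m) (Fin r) ℝ) (B : Matrix (Fin n) (Fin r) ℝ)
    (hA : A = R⁻¹ * U.submatrix id (Fin.castLE hrm) *
      Matrix.diagonal (fun i : Fin r => σ (i : ℕ)))
    (hB : B = V.submatrix id (Fin.castLE hrn)) :
    A * Bᵀ = R⁻¹ * (U * Sr * Vᵀ) ∧
    ∀ (A' : Matrix (Fin m) (Fin r) ℝ) (B' : Matrix (Fin n) (Fin r) ℝ),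
      frobSq (X * (A * Bᵀ - ΔW)) ≤ frobSq (X * (A' * B'ᵀ - ΔW)) := by
  have hS' : S = rectDiag m n σ := Matrix.ext hS
  have hSr' : Sr = rectDiag m n (fun i => if i < r then σ i else 0) :=
    Matrix.ext fun i j => (hSr i j).trans (ite_and _ _ _ _)
  have hAB : A * Bᵀ = R⁻¹ * (U * Sr * Vᵀ) := by
    rw [hA, hB, hSr', ← submatrix_castLE_mul_diagonal_mul_transpose hrm hrn]
    simp only [Matrix.mul_assoc]
  refine ⟨hAB, fun A' B' => ?_⟩
  have hfactor : Uᵀ * (R * (A' * B'ᵀ)) * V = (Uᵀ * R * A') * (Vᵀ * B')ᵀ := by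
    simp only [transpose_mul, transpose_transpose, Matrix.mul_assoc]
  have htrunc : Uᵀ * (R * (A * Bᵀ)) * V = Sr := by
    rw [hAB, mul_nonsing_inv_cancel_left R _ ((isUnit_iff_isUnit_det R).mp hR),
      ← Matrix.mul_assoc, ← Matrix.mul_assoc, hU₁, Matrix.one_mul, Matrix.mul_assoc, hV₁,
      Matrix.mul_one]
  have hobj := frobSq_mul_sub_eq_of_svd hH hU₁ hV₁ hSVD
  rw [hobj, hobj, htrunc, hfactor, hS', hSr']
  exact frobSq_truncate_sub_rectDiag_le hσnn hσmono _ _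

/-- With `RᵀR = XᵀX` for full-column-rank `X` and an SVD `R ΔW = U Σ Vᵀ`,
setting `A = R⁻¹ U_{:r} Σ_{:r}` and `B = V_{:r}` yields
`A Bᵀ = R⁻¹ LR_r(R ΔW)` (where `LR_r(R ΔW) = U Σ_{:r-truncated} Vᵀ`), and
`(A, B)` is an optimal solution of `min ‖X(A Bᵀ − ΔW)‖²_F`. -/
theorem stmt14 {p m n r : ℕ} (hrm : r ≤ m) (hrn : r ≤ n)
    (X : Matrix (Fin p) (Fin m) ℝ) (hX : X.rank = m)
    (R : Matrix (Fin m) (Fin m) ℝ) (hR : IsUnit R) (hH : Rᵀ * R = Xᵀ * X)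
    (ΔW : Matrix (Fin m) (Fin n) ℝ)
    (U : Matrix (Fin m) (Fin m) ℝ) (V : Matrix (Fin n) (Fin n) ℝ)
    (σ : ℕ → ℝ)
    (hU₁ : Uᵀ * U = 1) (hU₂ : U * Uᵀ = 1)
    (hV₁ : Vᵀ * V = 1) (hV₂ : V * Vᵀ = 1)
    (hσnn : ∀ i, 0 ≤ σ i) (hσmono : ∀ i j, i ≤ j → σ j ≤ σ i)
    (S : Matrix (Fin m) (Fin n) ℝ)
    (hS : ∀ i j, S i j = if (i : ℕ) = (j : ℕ) then σ (i : ℕ) else 0)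
    (hSVD : R * ΔW = U * S * Vᵀ)
    (Sr : Matrix (Fin m) (Fin n) ℝ)
    (hSr : ∀ i j, Sr i j =
      if (i : ℕ) = (j : ℕ) ∧ (i : ℕ) < r then σ (i : ℕ) else 0)
    (A : Matrix (Fin m) (Fin r) ℝ) (B : Matrix (Fin n) (Fin r) ℝ)
    (hA : A = R⁻¹ * U.submatrix id (Fin.castLE hrm) *
      Matrix.diagonal (fun i : Fin r => σ (i : ℕ)))
    (hB : B = V.submatrix id (Fin.castLE hrn)) :
    A * Bᵀ = R⁻¹ * (U * Sr * Vᵀ) ∧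
    ∀ (A' : Matrix (Fin m) (Fin r) ℝ) (B' : Matrix (Fin n) (Fin r) ℝ),
      frobSq (X * (A * Bᵀ - ΔW)) ≤ frobSq (X * (A' * B'ᵀ - ΔW)) :=
  stmt14_general hrm hrn X R hR hH ΔW U V σ hU₁ hV₁ hσnn hσmono S hS hSVD Sr hSr A B hA hB
end
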